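/- Let W be a group and w ∈ W an element expressible as a product of two involutions. Then the reflection-length-type bound holds: for any conjugacy-invariant symmetric subset R ⊆ W with w's involution factors a, b ∈ ⟨R⟩, one has ℓ_R(w^n) ≤ ℓ_R(a) + ℓ_R(b) for odd n, and ℓ_R(w^n) ≤ 2·min{ℓ_R(a), ℓ_R(b)} for even n. In particular {ℓ_R(w^n)}_{n≥1} is bounded and the stable length sℓ_R(w) = 0. -/

import Mathlib

open Filter

/-!
If `w = a * b` with `a² = b² = 1`, then both `a` and `b` conjugate `w` to `w⁻¹`, so for any such
involution `c` one has `wᵏ c w⁻ᵏ = w²ᵏ c`. Hence `w²ᵏ⁺¹ = (wᵏ a w⁻ᵏ) b` and `w²ᵏ = (wᵏ c w⁻ᵏ) c`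
for `c ∈ {a, b}`. As `wlen R` is subadditive and conjugation invariant, the lengths of all powers
of `w` are bounded by `wlen R a + wlen R b`, which is finite when `a, b ∈ ⟨R⟩`.
-/

/-- Word length with respect to a subset `Y` of a group. -/
noncomputable def wlen {G : Type*} [Group G] (Y : Set G) (g : G) : ℕ∞ :=
  ⨅ (l : List G) (_ : ∀ x ∈ l, x ∈ Y) (_ : l.prod = g), (l.length : ℕ∞)

section WordLength

variable {G : Type*} [Group G] {Y : Set G}

theorem wlen_le_length (l : List G) (hl : ∀ x ∈ l, x ∈ Y) : wlen Y l.prod ≤ l.length :=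
  iInf_le_of_le l (iInf_le_of_le hl (iInf_le_of_le rfl le_rfl))

theorem wlen_mul_le (g h : G) : wlen Y (g * h) ≤ wlen Y g + wlen Y h := by
  refine ENat.le_iInf₂_add_iInf₂ fun l₁ hl₁ l₂ hl₂ => ENat.le_iInf_add_iInf fun hg hh => ?_
  subst hg hh
  calc wlen Y (l₁.prod * l₂.prod) = wlen Y (l₁ ++ l₂).prod := by rw [List.prod_append]
    _ ≤ (l₁ ++ l₂).length :=
        wlen_le_length _ fun x hx => (List.mem_append.mp hx).elim (hl₁ x) (hl₂ x)
    _ = l₁.length + l₂.length := by simp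

theorem wlen_conj_le (hY : ∀ r ∈ Y, ∀ x : G, x * r * x⁻¹ ∈ Y) (c g : G) :
    wlen Y (c * g * c⁻¹) ≤ wlen Y g := by
  refine le_iInf₂ fun l hl => le_iInf fun hg => ?_
  subst hg
  calc wlen Y (c * l.prod * c⁻¹) = wlen Y (l.map (MulAut.conj c)).prod := by
        simp [← map_list_prod]
    _ ≤ (l.map (MulAut.conj c)).length := wlen_le_length _ <| by
        simpa using fun r hr => hY r (hl r hr) c
    _ = l.length := by rw [List.length_map]

theorem wlen_ne_top_of_mem_closure (hY : ∀ r ∈ Y, r⁻¹ ∈ Y) {g : G}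
    (hg : g ∈ Subgroup.closure Y) : wlen Y g ≠ ⊤ := by
  have hY' : Y⁻¹ ⊆ Y := fun r hr => inv_inv r ▸ hY _ hr
  rw [← Subgroup.mem_toSubmonoid, Subgroup.closure_toSubmonoid, Set.union_eq_left.mpr hY'] at hg
  obtain ⟨l, hl, rfl⟩ := Submonoid.exists_list_of_mem_closure hg
  exact ne_top_of_le_ne_top (ENat.natCast_ne_top _) (wlen_le_length l hl)

end WordLength

section Involutions

variable {W : Type*} [Group W] {a b c w : W}

theorem conj_eq_inv_of_involutions (ha : a ^ 2 = 1) (hb : b ^ 2 = 1) :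
    a * (a * b) * a⁻¹ = (a * b)⁻¹ ∧ b * (a * b) * b⁻¹ = (a * b)⁻¹ := by
  have ha' : a⁻¹ = a := inv_eq_of_mul_eq_one_right (sq a ▸ ha)
  have hb' : b⁻¹ = b := inv_eq_of_mul_eq_one_right (sq b ▸ hb)
  rw [mul_inv_rev, ha', hb']
  exact ⟨by simp only [← mul_assoc, ← sq, ha, one_mul], by simp only [mul_assoc, ← sq, hb, mul_one]⟩

theorem pow_mul_mul_inv_pow_of_conj_eq_inv (hc : c * w * c⁻¹ = w⁻¹) (k : ℕ) :
    w ^ k * c * (w ^ k)⁻¹ = w ^ (2 * k) * c := by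
  have hc' : c * w⁻¹ * c⁻¹ = w := by
    calc c * w⁻¹ * c⁻¹ = (c * w * c⁻¹)⁻¹ := by group
      _ = w := by rw [hc, inv_inv]
  have hck : c * (w ^ k)⁻¹ * c⁻¹ = w ^ k := by rw [← inv_pow, ← conj_pow, hc']
  calc w ^ k * c * (w ^ k)⁻¹ = w ^ k * (c * (w ^ k)⁻¹ * c⁻¹) * c := by group
    _ = w ^ (2 * k) * c := by rw [hck, ← pow_add, two_mul]

variable {R : Set W} (hR : ∀ r ∈ R, ∀ x : W, x * r * x⁻¹ ∈ R)
include hR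

theorem wlen_pow_two_mul_le (hc : c * w * c⁻¹ = w⁻¹) (hc2 : c ^ 2 = 1) (k : ℕ) :
    wlen R (w ^ (2 * k)) ≤ 2 * wlen R c := by
  have hdecomp : w ^ (2 * k) = w ^ k * c * (w ^ k)⁻¹ * c := by
    rw [pow_mul_mul_inv_pow_of_conj_eq_inv hc, mul_assoc, ← sq, hc2, mul_one]
  calc wlen R (w ^ (2 * k)) ≤ wlen R (w ^ k * c * (w ^ k)⁻¹) + wlen R c :=
        hdecomp ▸ wlen_mul_le _ _
    _ ≤ wlen R c + wlen R c := by gcongr; exact wlen_conj_le hR _ _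
    _ = 2 * wlen R c := (two_mul _).symm

theorem wlen_pow_two_mul_add_one_le (ha : a * (a * b) * a⁻¹ = (a * b)⁻¹) (k : ℕ) :
    wlen R ((a * b) ^ (2 * k + 1)) ≤ wlen R a + wlen R b := by
  have hdecomp : (a * b) ^ (2 * k + 1) = (a * b) ^ k * a * ((a * b) ^ k)⁻¹ * b := by
    rw [pow_mul_mul_inv_pow_of_conj_eq_inv ha, pow_succ, mul_assoc]
  calc wlen R ((a * b) ^ (2 * k + 1)) ≤ wlen R ((a * b) ^ k * a * ((a * b) ^ k)⁻¹) + wlen R b :=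
        hdecomp ▸ wlen_mul_le _ _
    _ ≤ wlen R a + wlen R b := by gcongr; exact wlen_conj_le hR _ _

end Involutions

theorem tendsto_div_atTop_nhds_zero_of_le {u : ℕ → ℕ} {B : ℕ} (hu : ∀ n, u n ≤ B) :
    Tendsto (fun n : ℕ => (u n : ℝ) / n) atTop (nhds 0) :=
  squeeze_zero (fun n => by positivity) (fun n => by gcongr; exact_mod_cast hu n)
    (tendsto_const_div_atTop_nhds_zero_nat (B : ℝ))

theorem bounded_powers_of_product_of_involutions {W : Type*} [Group W]
    (a b w : W) (ha : a ^ 2 = 1) (hb : b ^ 2 = 1) (hw : w = a * b)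
    (R : Set W) (hRsymm : ∀ r ∈ R, r⁻¹ ∈ R)
    (hRconj : ∀ r ∈ R, ∀ x : W, x * r * x⁻¹ ∈ R)
    (haR : a ∈ Subgroup.closure R) (hbR : b ∈ Subgroup.closure R) :
    (∀ n : ℕ, Odd n → wlen R (w ^ n) ≤ wlen R a + wlen R b) ∧
      (∀ n : ℕ, Even n → wlen R (w ^ n) ≤ 2 * min (wlen R a) (wlen R b)) ∧
      (∃ B : ℕ, ∀ n : ℕ, 1 ≤ n → wlen R (w ^ n) ≤ (B : ℕ∞)) ∧
      Tendsto (fun n : ℕ => ((wlen R (w ^ n)).toNat : ℝ) / n) atTop (nhds 0) := by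
  subst hw
  obtain ⟨hca, hcb⟩ := conj_eq_inv_of_involutions ha hb
  have hodd : ∀ n : ℕ, Odd n → wlen R ((a * b) ^ n) ≤ wlen R a + wlen R b := by
    rintro n ⟨k, rfl⟩
    exact wlen_pow_two_mul_add_one_le hRconj hca k
  have heven : ∀ n : ℕ, Even n → wlen R ((a * b) ^ n) ≤ 2 * min (wlen R a) (wlen R b) := by
    rintro n ⟨k, rfl⟩
    rw [← two_mul, mul_min_of_nonneg _ _ (by norm_num)]
    exact le_min (wlen_pow_two_mul_le hRconj hca ha k) (wlen_pow_two_mul_le hRconj hcb hb k)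
  have hbound : ∀ n : ℕ, wlen R ((a * b) ^ n) ≤ wlen R a + wlen R b := fun n =>
    (Nat.even_or_odd n).elim
      (fun he => (heven n he).trans <| by
        rw [two_mul]; exact add_le_add (min_le_left _ _) (min_le_right _ _))
      (hodd n)
  have hfin : wlen R a + wlen R b ≠ ⊤ := WithTop.add_ne_top.mpr
    ⟨wlen_ne_top_of_mem_closure hRsymm haR, wlen_ne_top_of_mem_closure hRsymm hbR⟩
  refine ⟨hodd, heven, ⟨(wlen R a + wlen R b).toNat, fun n _ => ?_⟩, ?_⟩
  · exact (ENat.natCast_toNat hfin).symm ▸ hbound n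
  · exact tendsto_div_atTop_nhds_zero_of_le fun n => ENat.toNat_le_toNat (hbound n) hfin
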